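/- arXiv:2008.09458 — 2 statements merged into one kernel-verified Lean document; each statement's English description precedes it below -/
import Mathlib

section
/- Let (Ω, 𝒜, μ) be a measure space, let f₁, f₂, f₃ : Ω → ℝ be integrable functions, and let k₁, k₂ ∈ ℝ. Let Φ : Ω → ℝ be the indicator function of the measurable set S = {x ∈ Ω : f₃(x) > k₁ f₂(x) + k₂ f₁(x)}. Then for every measurable function ψ : Ω → ℝ with 0 ≤ ψ(x) ≤ 1 for all x, such that ψ·f₁, ψ·f₂, ψ·f₃ are integrable and ∫ ψ f₁ dμ = ∫ Φ f₁ dμ and ∫ ψ f₂ dμ = ∫ Φ f₂ dμ, one has ∫ ψ f₃ dμ ≤ ∫ Φ f₃ dμ. -/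
/-!
Put `h := k₁ f₂ + k₂ f₁`. Pointwise `(Φ - ψ)(f₃ - h) ≥ 0`, because `Φ = 1 ≥ ψ` where
`f₃ > h` and `Φ = 0 ≤ ψ` elsewhere. Integrating, `∫ ψ (f₃ - h) ≤ ∫ Φ (f₃ - h)`, and the
two constraints make the `h`-parts of both sides equal.
-/

open MeasureTheory

section LinearCombination

variable {Ω : Type*} [MeasurableSpace Ω] {μ : Measure Ω} {φ f₁ f₂ f₃ : Ω → ℝ}

theorem integrable_mul_sub_linear_comb (h₁ : Integrable (fun x => φ x * f₁ x) μ)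
    (h₂ : Integrable (fun x => φ x * f₂ x) μ) (h₃ : Integrable (fun x => φ x * f₃ x) μ)
    (k₁ k₂ : ℝ) :
    Integrable (fun x => φ x * (f₃ x - (k₁ * f₂ x + k₂ * f₁ x))) μ := by
  simp_rw [mul_sub, mul_add, mul_left_comm (φ _)]
  exact h₃.sub ((h₂.const_mul k₁).add (h₁.const_mul k₂))

theorem integral_mul_sub_linear_comb (h₁ : Integrable (fun x => φ x * f₁ x) μ)
    (h₂ : Integrable (fun x => φ x * f₂ x) μ) (h₃ : Integrable (fun x => φ x * f₃ x) μ)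
    (k₁ k₂ : ℝ) :
    ∫ x, φ x * (f₃ x - (k₁ * f₂ x + k₂ * f₁ x)) ∂μ =
      ∫ x, φ x * f₃ x ∂μ - (k₁ * ∫ x, φ x * f₂ x ∂μ + k₂ * ∫ x, φ x * f₁ x ∂μ) := by
  have hcomb : Integrable (fun x => k₁ * (φ x * f₂ x) + k₂ * (φ x * f₁ x)) μ :=
    (h₂.const_mul k₁).add (h₁.const_mul k₂)
  simp_rw [mul_sub, mul_add, mul_left_comm (φ _)]
  rw [integral_sub h₃ hcomb, integral_add (h₂.const_mul k₁) (h₁.const_mul k₂),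
    integral_const_mul, integral_const_mul]

end LinearCombination

theorem mul_sub_le_indicator_lt_mul_sub {Ω : Type*} {f g ψ : Ω → ℝ} {x : Ω}
    (hψ0 : 0 ≤ ψ x) (hψ1 : ψ x ≤ 1) :
    ψ x * (f x - g x) ≤ {y | g y < f y}.indicator (fun _ => (1 : ℝ)) x * (f x - g x) := by
  by_cases hx : g x < f x
  · rw [Set.indicator_of_mem (s := {y | g y < f y}) hx]
    nlinarith
  · rw [Set.indicator_of_notMem (s := {y | g y < f y}) hx]
    nlinarith

theorem MeasureTheory.Integrable.indicator_one_mul {Ω : Type*} [MeasurableSpace Ω]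
    {μ : Measure Ω} {s : Set Ω} {f : Ω → ℝ} (hf : Integrable f μ) (hs : MeasurableSet s) :
    Integrable (fun x => s.indicator (fun _ => (1 : ℝ)) x * f x) μ := by
  simpa only [← Set.indicator_mul_left, one_mul] using hf.indicator hs

theorem generalized_neyman_pearson_two_constraints_general
    {Ω : Type*} [MeasurableSpace Ω] (μ : Measure Ω)
    (f₁ f₂ f₃ : Ω → ℝ)
    (hf₁ : Integrable f₁ μ) (hf₂ : Integrable f₂ μ) (hf₃ : Integrable f₃ μ)
    (k₁ k₂ : ℝ)
    (S : Set Ω) (hS : S = {x | f₃ x > k₁ * f₂ x + k₂ * f₁ x})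
    (hSm : MeasurableSet S)
    (Φ : Ω → ℝ) (hΦ : Φ = S.indicator (fun _ => (1 : ℝ)))
    (ψ : Ω → ℝ)
    (hψ0 : ∀ x, 0 ≤ ψ x) (hψ1 : ∀ x, ψ x ≤ 1)
    (hi1 : Integrable (fun x => ψ x * f₁ x) μ)
    (hi2 : Integrable (fun x => ψ x * f₂ x) μ)
    (hi3 : Integrable (fun x => ψ x * f₃ x) μ)
    (he1 : ∫ x, ψ x * f₁ x ∂μ = ∫ x, Φ x * f₁ x ∂μ)
    (he2 : ∫ x, ψ x * f₂ x ∂μ = ∫ x, Φ x * f₂ x ∂μ) :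
    ∫ x, ψ x * f₃ x ∂μ ≤ ∫ x, Φ x * f₃ x ∂μ := by
  subst hΦ
  have hI1 := hf₁.indicator_one_mul hSm
  have hI2 := hf₂.indicator_one_mul hSm
  have hI3 := hf₃.indicator_one_mul hSm
  have hmono : ∫ x, ψ x * (f₃ x - (k₁ * f₂ x + k₂ * f₁ x)) ∂μ ≤
      ∫ x, S.indicator (fun _ => (1 : ℝ)) x * (f₃ x - (k₁ * f₂ x + k₂ * f₁ x)) ∂μ := by
    refine integral_mono (integrable_mul_sub_linear_comb hi1 hi2 hi3 k₁ k₂)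
      (integrable_mul_sub_linear_comb hI1 hI2 hI3 k₁ k₂) fun x => ?_
    subst hS
    exact mul_sub_le_indicator_lt_mul_sub (g := fun x => k₁ * f₂ x + k₂ * f₁ x)
      (hψ0 x) (hψ1 x)
  rw [integral_mul_sub_linear_comb hi1 hi2 hi3, integral_mul_sub_linear_comb hI1 hI2 hI3,
    he1, he2] at hmono
  linarith

/-- Generalized Neyman–Pearson auxiliary lemma with m = 2 constraints:
among all tests `ψ` (measurable, `[0,1]`-valued) meeting the two integral
constraints against `f₁` and `f₂`, the indicator `Φ` of the region where
`f₃` exceeds the linear combination `k₁ f₂ + k₂ f₁` maximizes the integral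
against `f₃`. -/
theorem generalized_neyman_pearson_two_constraints
    {Ω : Type*} [MeasurableSpace Ω] (μ : Measure Ω)
    (f₁ f₂ f₃ : Ω → ℝ)
    (hf₁ : Integrable f₁ μ) (hf₂ : Integrable f₂ μ) (hf₃ : Integrable f₃ μ)
    (k₁ k₂ : ℝ)
    (S : Set Ω) (hS : S = {x | f₃ x > k₁ * f₂ x + k₂ * f₁ x})
    (hSm : MeasurableSet S)
    (Φ : Ω → ℝ) (hΦ : Φ = S.indicator (fun _ => (1 : ℝ)))
    (ψ : Ω → ℝ) (hψm : Measurable ψ)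
    (hψ0 : ∀ x, 0 ≤ ψ x) (hψ1 : ∀ x, ψ x ≤ 1)
    (hi1 : Integrable (fun x => ψ x * f₁ x) μ)
    (hi2 : Integrable (fun x => ψ x * f₂ x) μ)
    (hi3 : Integrable (fun x => ψ x * f₃ x) μ)
    (he1 : ∫ x, ψ x * f₁ x ∂μ = ∫ x, Φ x * f₁ x ∂μ)
    (he2 : ∫ x, ψ x * f₂ x ∂μ = ∫ x, Φ x * f₂ x ∂μ) :
    ∫ x, ψ x * f₃ x ∂μ ≤ ∫ x, Φ x * f₃ x ∂μ :=
  generalized_neyman_pearson_two_constraints_general μ f₁ f₂ f₃ hf₁ hf₂ hf₃ k₁ k₂ S hS hSm Φ hΦ ψ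
    hψ0 hψ1 hi1 hi2 hi3 he1 he2
end

section
/- Let N ≥ 1 and M ≥ 1 be integers, let γ ∈ ℝ, ω₀ ∈ ℝ with ω₀ ≠ 0, and for ω ∈ ℝ define the steering vector s(ω) ∈ ℂ^N by s(ω)_n = exp(i γ (ω/ω₀) n) for n = 0, …, N−1. For observations x_m ∈ ℂ^N, complex amplitudes A_m ∈ ℂ, and noise variances σ_m² > 0 (m = 1, …, M), define L : ℝ → ℝ by L(Δ) = −Σ_{m=1}^{M} σ_m^{−2} ‖x_m − A_m s(ω₀ + Δ)‖², where ‖·‖ is the Euclidean norm on ℂ^N. Then L is twice differentiable at Δ = 0 with L''(0) = −2 Σ_{m=1}^{M} (γ²/(ω₀² σ_m²)) · Re( A_m Σ_{n=0}^{N−1} n² · conj(x_m[n]) · exp(i γ n) ). -/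
/-!
Every entry of a steering vector has modulus one, so
`‖x - A s‖² = ‖x‖² + ‖A‖² - 2 Re(conj x · A · s)` and `L` is a constant plus a weighted sum of
terms `Re(c · exp(iγn + iγnΔ/ω₀))`. Each differentiation in `Δ` multiplies such a term by
`iγn/ω₀`, so the second derivative at `0` carries the factor `-γ²n²/ω₀²`.
-/

open Complex Finset Topology Filter ComplexConjugate

theorem sq_norm_sub_mul_of_norm_eq_one (x A z : ℂ) (hz : ‖z‖ = 1) :
    ‖x - A * z‖ ^ 2 = ‖x‖ ^ 2 + ‖A‖ ^ 2 - 2 * (conj x * A * z).re := by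
  rw [Complex.sq_norm, normSq_sub, ← Complex.sq_norm, ← Complex.sq_norm, norm_mul, hz, mul_one,
    ← conj_re, map_mul, conj_conj, mul_comm, ← mul_assoc]
  ring

theorem hasDerivAt_re_mul_exp_affine (c α β : ℂ) (t : ℝ) :
    HasDerivAt (fun t : ℝ => (c * exp (α + β * t)).re) (c * β * exp (α + β * t)).re t := by
  have h : HasDerivAt (fun z : ℂ => c * exp (α + β * z)) (c * β * exp (α + β * t)) t := by
    have := (((hasDerivAt_id (t : ℂ)).const_mul β).const_add α).cexp.const_mul c
    simpa [mul_comm, mul_left_comm, mul_assoc] using this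
  exact h.real_of_complex

theorem hasDerivAt_sq_norm_sub_mul_exp_affine (x A α β : ℂ) (hα : α.re = 0) (hβ : β.re = 0)
    (t : ℝ) :
    HasDerivAt (fun t : ℝ => ‖x - A * exp (α + β * t)‖ ^ 2)
      (-2 * conj x * A * β * exp (α + β * t)).re t := by
  have hexp : ∀ t : ℝ, ‖exp (α + β * t)‖ = 1 := fun t => by simp [norm_exp, hα, hβ]
  simp_rw [sq_norm_sub_mul_of_norm_eq_one _ _ _ (hexp _)]
  refine (((hasDerivAt_re_mul_exp_affine (conj x * A) α β t).const_mul 2).const_sub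
    (‖x‖ ^ 2 + ‖A‖ ^ 2)).congr_deriv ?_
  rw [← re_ofReal_mul, ← neg_re]
  congr 1
  push_cast
  ring

section WeightedSums

variable {ι κ : Type*} [Fintype ι] [Fintype κ] (w : ι → ℝ) (α β : κ → ℂ)

theorem hasDerivAt_weighted_sum_re_mul_exp_affine (c : ι → κ → ℂ) (t : ℝ) :
    HasDerivAt (fun t : ℝ => ∑ m, w m * ∑ n, (c m n * exp (α n + β n * t)).re)
      (∑ m, w m * ∑ n, (c m n * β n * exp (α n + β n * t)).re) t :=
  HasDerivAt.fun_sum fun m _ => (HasDerivAt.fun_sum fun n _ =>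
    hasDerivAt_re_mul_exp_affine (c m n) (α n) (β n) t).const_mul (w m)

theorem hasDerivAt_weighted_sum_sq_norm_sub_mul_exp_affine (x : ι → κ → ℂ) (A : ι → ℂ)
    (hα : ∀ n, (α n).re = 0) (hβ : ∀ n, (β n).re = 0) (t : ℝ) :
    HasDerivAt (fun t : ℝ => ∑ m, w m * ∑ n, ‖x m n - A m * exp (α n + β n * t)‖ ^ 2)
      (∑ m, w m * ∑ n, (-2 * conj (x m n) * A m * β n * exp (α n + β n * t)).re) t :=
  HasDerivAt.fun_sum fun m _ => (HasDerivAt.fun_sum fun n _ =>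
    hasDerivAt_sq_norm_sub_mul_exp_affine (x m n) (A m) (α n) (β n) (hα n) (hβ n) t).const_mul (w m)

end WeightedSums

theorem loglikelihood_second_deriv_at_zero_general
    (N M : ℕ)
    (γ ω₀ : ℝ) (hω₀ : ω₀ ≠ 0)
    (s : ℝ → Fin N → ℂ)
    (hs : ∀ ω n, s ω n = Complex.exp (Complex.I * (γ : ℂ) * ((ω / ω₀ : ℝ) : ℂ) * ((n : ℕ) : ℂ)))
    (x : Fin M → Fin N → ℂ) (A : Fin M → ℂ)
    (σsq : Fin M → ℝ)
    (L : ℝ → ℝ)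
    (hL : ∀ Δ, L Δ = -∑ m, (σsq m)⁻¹ * ∑ n, ‖x m n - A m * s (ω₀ + Δ) n‖ ^ 2) :
    (∀ᶠ Δ in 𝓝 (0 : ℝ), DifferentiableAt ℝ L Δ) ∧
      HasDerivAt (deriv L)
        (-2 * ∑ m, (γ ^ 2 / (ω₀ ^ 2 * σsq m)) *
          (A m * ∑ n : Fin N, ((n : ℕ) : ℂ) ^ 2 * (starRingEnd ℂ) (x m n) *
            Complex.exp (Complex.I * (γ : ℂ) * ((n : ℕ) : ℂ))).re)
        0 := by
  set α : Fin N → ℂ := fun n => I * γ * (n : ℕ)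
  set β : Fin N → ℂ := fun n => I * γ * (n : ℕ) / ω₀
  have hs_affine : ∀ Δ n, s (ω₀ + Δ) n = exp (α n + β n * Δ) := fun Δ n => by
    rw [hs]; simp only [α, β]; congr 1; push_cast; field_simp [ofReal_ne_zero.mpr hω₀]
  set c : Fin M → Fin N → ℂ := fun m n => -2 * conj (x m n) * A m * β n
  have hL' : ∀ Δ : ℝ,
      HasDerivAt L (-∑ m, (σsq m)⁻¹ * ∑ n, (c m n * exp (α n + β n * Δ)).re) Δ := by
    intro Δ
    simp only [funext hL, hs_affine]
    exact (hasDerivAt_weighted_sum_sq_norm_sub_mul_exp_affine _ α β x A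
      (fun n => by simp [α]) (fun n => by simp [β]) Δ).fun_neg
  refine ⟨.of_forall fun Δ => (hL' Δ).differentiableAt, ?_⟩
  rw [show deriv L = _ from funext fun Δ => (hL' Δ).deriv]
  refine (hasDerivAt_weighted_sum_re_mul_exp_affine _ α β c 0).fun_neg.congr_deriv ?_
  have hterm : ∀ m n, c m n * β n * exp (α n + β n * (0 : ℝ)) = ((2 * (γ / ω₀) ^ 2 : ℝ) : ℂ) *
      (A m * (((n : ℕ) : ℂ) ^ 2 * conj (x m n) * exp (I * γ * (n : ℕ)))) := by
    intro m n
    simp only [c, α, β, ofReal_zero, mul_zero, add_zero]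
    push_cast
    linear_combination
      (-2 * conj (x m n) * A m * γ ^ 2 * (n : ℕ) ^ 2 / ω₀ ^ 2 * exp (I * γ * (n : ℕ))) * I_sq
  simp only [hterm, re_ofReal_mul, mul_sum, re_sum, ← sum_neg_distrib]
  exact sum_congr rfl fun m _ => sum_congr rfl fun n _ => by ring

/-- Second-derivative formula (19): the reduced Gaussian log-likelihood
`L(Δ) = −Σ_m σ_m⁻² ‖x_m − A_m s(ω₀+Δ)‖²` of the frequency-deviation model
is twice differentiable at `Δ = 0` with
`L''(0) = −2 Σ_m (γ²/(ω₀² σ_m²)) Re(A_m Σ_n n² · conj(x_m[n]) e^{iγn})`. -/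
theorem loglikelihood_second_deriv_at_zero
    (N M : ℕ) (hN : 1 ≤ N) (hM : 1 ≤ M)
    (γ ω₀ : ℝ) (hω₀ : ω₀ ≠ 0)
    (s : ℝ → Fin N → ℂ)
    (hs : ∀ ω n, s ω n = Complex.exp (Complex.I * (γ : ℂ) * ((ω / ω₀ : ℝ) : ℂ) * ((n : ℕ) : ℂ)))
    (x : Fin M → Fin N → ℂ) (A : Fin M → ℂ)
    (σsq : Fin M → ℝ) (hσ : ∀ m, 0 < σsq m)
    (L : ℝ → ℝ)
    (hL : ∀ Δ, L Δ = -∑ m, (σsq m)⁻¹ * ∑ n, ‖x m n - A m * s (ω₀ + Δ) n‖ ^ 2) :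
    (∀ᶠ Δ in 𝓝 (0 : ℝ), DifferentiableAt ℝ L Δ) ∧
      HasDerivAt (deriv L)
        (-2 * ∑ m, (γ ^ 2 / (ω₀ ^ 2 * σsq m)) *
          (A m * ∑ n : Fin N, ((n : ℕ) : ℂ) ^ 2 * (starRingEnd ℂ) (x m n) *
            Complex.exp (Complex.I * (γ : ℂ) * ((n : ℕ) : ℂ))).re)
        0 :=
  loglikelihood_second_deriv_at_zero_general N M γ ω₀ hω₀ s hs x A σsq L hL
end
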